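/- arXiv:1603.02826 — 2 statements merged into one kernel-verified Lean document; each statement's English description precedes it below -/
import Mathlib

section
/- (Homomorphisms G₂ → G₁ computed via pairing inversion, after Galbraith–Hess–Vercauteren.) Let e : G₁ × G₂ → G_T be a non-degenerate bilinear pairing on cyclic groups of prime order q, and fix P₀ ≠ 0 in G₁ and Q₀ ≠ 0 in G₂. Then there exists a unique group homomorphism φ : G₂ → G₁ such that e(φ(Q), Q₀) = e(P₀, Q) for all Q ∈ G₂; moreover φ(Q₀) = P₀, so φ is nontrivial, and φ is a group isomorphism from G₂ onto G₁. -/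
/-- Homomorphisms `G₂ → G₁` computed via pairing inversion,
after Galbraith–Hess–Vercauteren: for a non-degenerate pairing on cyclic
groups of prime order `q` and fixed `P₀ ≠ 0` in `G₁`, `Q₀ ≠ 0` in `G₂`, there
is a unique group homomorphism `φ : G₂ →+ G₁` with `e (φ Q) Q₀ = e P₀ Q` for
all `Q`; moreover any such `φ` satisfies `φ Q₀ = P₀` (so `φ` is nontrivial)
and is a group isomorphism from `G₂` onto `G₁`. -/
theorem pairing_inversion_homomorphism {G₁ G₂ G_T : Type*}
    [AddCommGroup G₁] [AddCommGroup G₂] [CommGroup G_T]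
    (q : ℕ) (hq : q.Prime)
    [IsAddCyclic G₁] [IsAddCyclic G₂] [IsCyclic G_T]
    (hG₁ : Nat.card G₁ = q) (hG₂ : Nat.card G₂ = q) (hG_T : Nat.card G_T = q)
    (e : G₁ → G₂ → G_T)
    (hbil₁ : ∀ (P P' : G₁) (Q : G₂), e (P + P') Q = e P Q * e P' Q)
    (hbil₂ : ∀ (P : G₁) (Q Q' : G₂), e P (Q + Q') = e P Q * e P Q')
    (hnd₁ : ∀ P : G₁, P ≠ 0 → ∃ Q : G₂, e P Q ≠ 1)
    (hnd₂ : ∀ Q : G₂, Q ≠ 0 → ∃ P : G₁, e P Q ≠ 1)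
    (P₀ : G₁) (hP₀ : P₀ ≠ 0) (Q₀ : G₂) (hQ₀ : Q₀ ≠ 0) :
    (∃! φ : G₂ →+ G₁, ∀ Q : G₂, e (φ Q) Q₀ = e P₀ Q) ∧
      ∀ φ : G₂ →+ G₁, (∀ Q : G₂, e (φ Q) Q₀ = e P₀ Q) →
        φ Q₀ = P₀ ∧ φ ≠ 0 ∧ Function.Bijective φ := by
  -- finiteness
  have hq0 : q ≠ 0 := hq.ne_zero
  have hfin₁ : Finite G₁ := Nat.finite_of_card_ne_zero (by rw [hG₁]; exact hq0)
  have hfin₂ : Finite G₂ := Nat.finite_of_card_ne_zero (by rw [hG₂]; exact hq0)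
  -- bilinearity powers
  have key₁ : ∀ (n : ℤ) (P : G₁) (Q : G₂), e (n • P) Q = (e P Q) ^ n := by
    intro n P Q
    let f : Multiplicative G₁ →* G_T :=
      MonoidHom.mk' (fun P => e P.toAdd Q) (fun a b => hbil₁ _ _ _)
    have := map_zpow f (Multiplicative.ofAdd P) n
    simpa [f, ← ofAdd_zsmul] using this
  have key₂ : ∀ (n : ℤ) (P : G₁) (Q : G₂), e P (n • Q) = (e P Q) ^ n := by
    intro n P Q
    let f : Multiplicative G₂ →* G_T :=
      MonoidHom.mk' (fun Q' => e P Q'.toAdd) (fun a b => hbil₂ _ _ _)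
    have := map_zpow f (Multiplicative.ofAdd Q) n
    simpa [f, ← ofAdd_zsmul] using this
  have : NeZero q := ⟨hq0⟩
  -- orders of P₀, Q₀
  have hoQ₀ : addOrderOf Q₀ = q := by
    have hdvd : addOrderOf Q₀ ∣ q := hG₂ ▸ addOrderOf_dvd_natCard Q₀
    rcases hq.eq_one_or_self_of_dvd _ hdvd with h | h
    · exact absurd (AddMonoid.addOrderOf_eq_one_iff.mp h) hQ₀
    · exact h
  have hoP₀ : addOrderOf P₀ = q := by
    have hdvd : addOrderOf P₀ ∣ q := hG₁ ▸ addOrderOf_dvd_natCard P₀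
    rcases hq.eq_one_or_self_of_dvd _ hdvd with h | h
    · exact absurd (AddMonoid.addOrderOf_eq_one_iff.mp h) hP₀
    · exact h
  -- generators
  have hgenQ : ∀ x : G₂, ∃ k : ℤ, k • Q₀ = x := by
    intro x
    have hc : Nat.card (AddSubgroup.zmultiples Q₀) = Nat.card G₂ := by
      rw [Nat.card_zmultiples, hoQ₀, hG₂]
    have htop : AddSubgroup.zmultiples Q₀ = ⊤ := AddSubgroup.eq_top_of_card_eq _ hc
    exact AddSubgroup.mem_zmultiples_iff.mp (htop ▸ AddSubgroup.mem_top x)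
  have hgenP : ∀ x : G₁, ∃ k : ℤ, k • P₀ = x := by
    intro x
    have hc : Nat.card (AddSubgroup.zmultiples P₀) = Nat.card G₁ := by
      rw [Nat.card_zmultiples, hoP₀, hG₁]
    have htop : AddSubgroup.zmultiples P₀ = ⊤ := AddSubgroup.eq_top_of_card_eq _ hc
    exact AddSubgroup.mem_zmultiples_iff.mp (htop ▸ AddSubgroup.mem_top x)
  -- kernel triviality on each side
  have hker₁ : ∀ P : G₁, e P Q₀ = 1 → P = 0 := by
    intro P hP
    by_contra h
    obtain ⟨Q, hQ⟩ := hnd₁ P h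
    obtain ⟨k, hk⟩ := hgenQ Q
    rw [← hk, key₂, hP, one_zpow] at hQ
    exact hQ rfl
  have hker₂ : ∀ Q : G₂, e P₀ Q = 1 → Q = 0 := by
    intro Q hQ
    by_contra h
    obtain ⟨P, hP⟩ := hnd₂ Q h
    obtain ⟨k, hk⟩ := hgenP P
    rw [← hk, key₁, hQ, one_zpow] at hP
    exact hP rfl
  -- construct ψ : ZMod q →+ G₂ and φ
  have hqQ : (zmultiplesHom G₂ Q₀) (q : ℤ) = 0 := by
    simpa [zmultiplesHom_apply, natCast_zsmul] using
      (hoQ₀ ▸ addOrderOf_nsmul_eq_zero Q₀ : q • Q₀ = 0)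
  have hqP : (zmultiplesHom G₁ P₀) (q : ℤ) = 0 := by
    simpa [zmultiplesHom_apply, natCast_zsmul] using
      (hoP₀ ▸ addOrderOf_nsmul_eq_zero P₀ : q • P₀ = 0)
  set ψ : ZMod q →+ G₂ := ZMod.lift q ⟨zmultiplesHom G₂ Q₀, hqQ⟩ with hψdef
  set f : ZMod q →+ G₁ := ZMod.lift q ⟨zmultiplesHom G₁ P₀, hqP⟩ with hfdef
  have hψint : ∀ k : ℤ, ψ (k : ZMod q) = k • Q₀ := by
    intro k; simp [hψdef]
  have hfint : ∀ k : ℤ, f (k : ZMod q) = k • P₀ := by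
    intro k; simp [hfdef]
  have hψsurj : Function.Surjective ψ := by
    intro x
    obtain ⟨k, hk⟩ := hgenQ x
    exact ⟨(k : ZMod q), by rw [hψint k, hk]⟩
  have hψbij : Function.Bijective ψ := by
    rw [Nat.bijective_iff_surjective_and_card]
    exact ⟨hψsurj, by simp [hG₂, Nat.card_eq_fintype_card, ZMod.card]⟩
  let Ψ : ZMod q ≃+ G₂ := AddEquiv.ofBijective ψ hψbij
  let φ₀ : G₂ →+ G₁ := f.comp Ψ.symm.toAddMonoidHom
  have hφ₀ : ∀ k : ℤ, φ₀ (k • Q₀) = k • P₀ := by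
    intro k
    have h1 : Ψ.symm (k • Q₀) = (k : ZMod q) := by
      apply Ψ.injective
      rw [AddEquiv.apply_symm_apply]
      exact (hψint k).symm ▸ rfl
    show f (Ψ.symm (k • Q₀)) = k • P₀
    rw [h1, hfint]
  have hφ₀prop : ∀ Q : G₂, e (φ₀ Q) Q₀ = e P₀ Q := by
    intro Q
    obtain ⟨k, hk⟩ := hgenQ Q
    rw [← hk, hφ₀, key₁, key₂]
  -- uniqueness
  have huniq : ∀ φ : G₂ →+ G₁, (∀ Q : G₂, e (φ Q) Q₀ = e P₀ Q) → φ = φ₀ := by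
    intro φ hφ
    ext Q
    have h := (hφ Q).trans (hφ₀prop Q).symm
    have : e (φ Q - φ₀ Q) Q₀ = 1 := by
      rw [sub_eq_add_neg, hbil₁, show (-(φ₀ Q)) = (-1 : ℤ) • (φ₀ Q) by simp,
        key₁, h]
      group
    exact sub_eq_zero.mp (hker₁ _ this)
  -- assemble
  constructor
  · exact ⟨φ₀, hφ₀prop, huniq⟩
  · intro φ hφ
    have hφeq : φ = φ₀ := huniq φ hφ
    have hQ₀P₀ : φ Q₀ = P₀ := by
      have h := hφ Q₀
      have : e (φ Q₀ - P₀) Q₀ = 1 := by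
        rw [sub_eq_add_neg, hbil₁, show (-P₀) = (-1 : ℤ) • P₀ by simp, key₁, h]
        group
      exact sub_eq_zero.mp (hker₁ _ this)
    refine ⟨hQ₀P₀, ?_, ?_⟩
    · intro h0
      rw [h0] at hQ₀P₀
      exact hP₀ hQ₀P₀.symm
    · have hinj : Function.Injective φ := by
        intro a b hab
        have : φ (a - b) = 0 := by rw [map_sub, hab, sub_self]
        have h1 : e P₀ (a - b) = 1 := by
          rw [← hφ (a - b), this, show (0 : G₁) = (0 : ℤ) • P₀ by simp, key₁,
            zpow_zero]
        exact sub_eq_zero.mp (hker₂ _ h1)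
      rw [Nat.bijective_iff_injective_and_card]
      exact ⟨hinj, by rw [hG₁, hG₂]⟩
end

section
/- (Minimal embedding field, after Hitt.) Let p be a prime, m ≥ 1, q = p^m, and let r be a prime not dividing p. Let k be the embedding degree of q with respect to r (the least k ≥ 1 with r ∣ q^k − 1) and let d be the least d ≥ 1 with r ∣ p^d − 1 (the multiplicative order of p modulo r). Then d divides m·k; in particular the group of r-th roots of unity already lies in the field F_{p^d}, which may be a proper subfield of F_{q^k} = F_{p^{mk}}. -/
/-- Minimal embedding field, after Hitt: let `p` be a prime,
`m ≥ 1`, `q = p ^ m`, and `r` a prime not dividing `p`. Let `k` be the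
embedding degree of `q` with respect to `r` (the least `k ≥ 1` with
`r ∣ q ^ k − 1`) and let `d` be the least `d ≥ 1` with `r ∣ p ^ d − 1`
(the multiplicative order of `p` modulo `r`). Then `d ∣ m * k`; in particular
the `r`-th roots of unity already lie in `F_{p^d}`, which may be a proper
subfield of `F_{q^k} = F_{p^{m*k}}`. -/
theorem minimal_embedding_field_divides (p m q r k d : ℕ)
    (hp : p.Prime) (hm : 1 ≤ m) (hq : q = p ^ m)
    (hr : r.Prime) (hrp : ¬ r ∣ p)
    (hk : IsLeast {k' : ℕ | 1 ≤ k' ∧ (r : ℤ) ∣ (q : ℤ) ^ k' - 1} k)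
    (hd : IsLeast {d' : ℕ | 1 ≤ d' ∧ (r : ℤ) ∣ (p : ℤ) ^ d' - 1} d) :
    d ∣ m * k := by
  haveI : Fact r.Prime := ⟨hr⟩
  set a : ZMod r := (p : ZMod r) with ha
  have key : ∀ n : ℕ, ((r : ℤ) ∣ (p : ℤ) ^ n - 1) ↔ a ^ n = 1 := by
    intro n
    rw [← ZMod.intCast_zmod_eq_zero_iff_dvd]
    push_cast
    constructor
    · intro h; linear_combination h
    · intro h; linear_combination h
  -- d = orderOf a
  have ha1 : a ^ d = 1 := (key d).1 hd.1.2
  have hdpos : 0 < d := hd.1.1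
  have hordpos : 0 < orderOf a := by
    rcases Nat.eq_zero_or_pos (orderOf a) with h0 | h
    · exfalso
      have h1 : IsOfFinOrder a := isOfFinOrder_iff_pow_eq_one.2 ⟨d, hdpos, ha1⟩
      exact (orderOf_eq_zero_iff.1 h0) h1
    · exact h
  have hord_mem : orderOf a ∈ {d' : ℕ | 1 ≤ d' ∧ (r : ℤ) ∣ (p : ℤ) ^ d' - 1} :=
    ⟨hordpos, (key _).2 (pow_orderOf_eq_one a)⟩
  have hdle : d ≤ orderOf a := hd.2 hord_mem
  have hled : orderOf a ≤ d := Nat.le_of_dvd hdpos (orderOf_dvd_of_pow_eq_one ha1)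
  have hde : d = orderOf a := le_antisymm hdle hled
  -- a ^ (m*k) = 1
  have hk1 : (r : ℤ) ∣ (q : ℤ) ^ k - 1 := hk.1.2
  have : a ^ (m * k) = 1 := by
    have : (r : ℤ) ∣ (p : ℤ) ^ (m * k) - 1 := by
      rw [pow_mul]
      have : ((p : ℤ) ^ m) = (q : ℤ) := by rw [hq]; push_cast; ring
      rw [this]; exact hk1
    exact (key _).1 this
  rw [hde]
  exact orderOf_dvd_of_pow_eq_one this
end
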